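/- arXiv:2205.15487 — 2 statements merged into one kernel-verified Lean document; each statement's English description precedes it below -/
import Mathlib

section
/- Let Q be an acyclic n-properly-graded quiver. If Q is nicely-graded, then the first ZQ-type construction Z|_{n−1}Q is also nicely-graded. -/
/-! ### Walks in a quiver and the grade function -/

/-- A walk in a quiver from `i` to `j`: a finite sequence of arrows, each traversed
either forwards (`fwd`) or backwards (`bwd`).  This encodes the alternating sequences
of paths `(p_0, …, p_r)` of the paper: the forward steps make up the paths with even
index and the backward steps the paths with odd index. -/
inductive QWalk (V : Type) [Quiver.{0} V] : V → V → Type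
  | nil (i : V) : QWalk V i i
  | fwd {i j k : V} (α : i ⟶ j) (w : QWalk V j k) : QWalk V i k
  | bwd {i j k : V} (α : j ⟶ i) (w : QWalk V j k) : QWalk V i k

namespace QWalk

variable {V : Type} [Quiver.{0} V]

/-- The grade `u_{i,w}(j)` of a walk: the number of forwardly traversed arrows minus
the number of backwardly traversed arrows, i.e. `Σ_{h} (-1)^h l(p_h)`. -/
def grade : ∀ {i j : V}, QWalk V i j → ℤ
  | _, _, .nil _ => 0
  | _, _, .fwd _ w => w.grade + 1
  | _, _, .bwd _ w => w.grade - 1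

/-- The vertex `v` lies on the walk `w`. -/
def Mem : ∀ {i j : V}, QWalk V i j → V → Prop
  | _, _, .nil i, v => v = i
  | _, _, @QWalk.fwd _ _ i _ _ _ w, v => v = i ∨ w.Mem v
  | _, _, @QWalk.bwd _ _ i _ _ _ w, v => v = i ∨ w.Mem v

/-- Concatenation of walks. -/
def append : ∀ {i j l : V}, QWalk V i j → QWalk V j l → QWalk V i l
  | _, _, _, .nil _, w' => w'
  | _, _, _, .fwd α w, w' => .fwd α (w.append w')
  | _, _, _, .bwd α w, w' => .bwd α (w.append w')

/-- All vertices of the walk lie in the set `S`, i.e. the walk is a walk of the full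
subquiver on `S`. -/
def InSet {i j : V} (S : Set V) (w : QWalk V i j) : Prop := ∀ v : V, w.Mem v → v ∈ S

/-- `v` is a sink of the walk `w`: the walk passes through `v`, arriving along an arrow
pointing towards `v` and leaving along an arrow pointing towards `v`
(this is a vertex `t(p_{2h}) = t(p_{2h+1})` of a walk `(p_0, …, p_r)` in the paper). -/
def IsSink {i j : V} (w : QWalk V i j) (v : V) : Prop :=
  ∃ (a b : V) (α : a ⟶ v) (β : b ⟶ v) (w₁ : QWalk V i a) (w₂ : QWalk V b j),
    w = w₁.append (.fwd α (.bwd β w₂))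

/-- `v` is a source of the walk `w`: the walk passes through `v`, arriving along an arrow
pointing away from `v` and leaving along an arrow pointing away from `v`
(this is a vertex `s(p_{2h+1}) = s(p_{2h+2})` of a walk in the paper). -/
def IsSource {i j : V} (w : QWalk V i j) (v : V) : Prop :=
  ∃ (a b : V) (α : v ⟶ a) (β : v ⟶ b) (w₁ : QWalk V i a) (w₂ : QWalk V b j),
    w = w₁.append (.bwd α (.fwd β w₂))

end QWalk

/-- A quiver is *nicely-graded* if every cyclic walk has grade `0`,
i.e. `u_{i,w}(i) = 0` for every vertex `i` and every cyclic walk `w` from `i` to `i`. -/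
def NicelyGraded (V : Type) [Quiver.{0} V] : Prop :=
  ∀ (i : V) (w : QWalk V i i), w.grade = 0

/-- A quiver is connected if any two vertices are joined by a walk. -/
def WalkConnected (V : Type) [Quiver.{0} V] : Prop :=
  ∀ a b : V, Nonempty (QWalk V a b)
/-! ### Bound quivers, bound paths, properly-graded quivers -/

noncomputable section

open Quiver

/-- A vertex `v` lies on the path `p`. -/
def Quiver.Path.MemV {V : Type} [Quiver.{0} V] {i : V} :
    ∀ {j : V}, Quiver.Path i j → V → Prop
  | _, .nil, v => v = i
  | j, .cons p _, v => v = j ∨ p.MemV v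

/-- A *bound quiver* over the field `k`: a quiver together with, for each pair of
vertices, a set of relations, each relation being a formal `k`-linear combination
(a finitely supported function) of paths with that source and target. -/
structure BoundQuiver (k : Type) [Field k] (V : Type) [Quiver.{0} V] where
  rel : ∀ i j : V, Set (Quiver.Path i j →₀ k)

namespace BoundQuiver

variable {k : Type} [Field k] {V : Type} [Quiver.{0} V]

/-- The homogeneous component between `i` and `j` of the two-sided ideal `(ρ)` of the
path algebra `kQ` generated by the relations: the span of all elements obtained from a
relation by composing with a path on either side. -/
def idl (B : BoundQuiver k V) (i j : V) : Submodule k (Quiver.Path i j →₀ k) :=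
  Submodule.span k
    { x | ∃ (a b : V) (pre : Quiver.Path i a) (post : Quiver.Path b j)
        (r : Quiver.Path a b →₀ k), r ∈ B.rel a b ∧
          x = Finsupp.mapDomain (fun p => (pre.comp p).comp post) r }

/-- A path is a *bound path* if its image in the quotient algebra `kQ/(ρ)` is nonzero,
i.e. it does not lie in the ideal generated by the relations. -/
def Bound (B : BoundQuiver k V) {i j : V} (p : Quiver.Path i j) : Prop :=
  Finsupp.single p (1 : k) ∉ B.idl i j

/-- A *maximal bound path*: a bound path which is not a proper subpath of another
bound path. -/
def MaxBound (B : BoundQuiver k V) {i j : V} (p : Quiver.Path i j) : Prop :=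
  B.Bound p ∧ ∀ {i' j' : V} (x : Quiver.Path i' i) (y : Quiver.Path j j'),
    B.Bound ((x.comp p).comp y) → x.length = 0 ∧ y.length = 0

/-- A bound quiver is *`n`-properly-graded* if all maximal bound paths have the same
length `n`. -/
def ProperlyGraded (B : BoundQuiver k V) (n : ℕ) : Prop :=
  ∀ {i j : V} (p : Quiver.Path i j), B.MaxBound p → p.length = n

end BoundQuiver

/-- The quiver has no oriented cycles. -/
def QuiverAcyclic (V : Type) [Quiver.{0} V] : Prop :=
  ∀ (i : V) (p : Quiver.Path i i), p.length = 0

end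
/-! ### Maximal linearly independent sets of maximal bound paths -/

noncomputable section

/-- The type of all paths of a quiver, together with their endpoints. -/
def PathsOf (V : Type) [Quiver.{0} V] : Type := Σ i j : V, Quiver.Path i j

/-- The ideal generated by the relations, viewed inside the space of formal `k`-linear
combinations of all paths of the quiver (the underlying space of the path algebra). -/
def BoundQuiver.bigIdl {k : Type} [Field k] {V : Type} [Quiver.{0} V]
    (B : BoundQuiver k V) : Submodule k (PathsOf V →₀ k) :=
  Submodule.span k
    { x | ∃ (i j a b : V) (pre : Quiver.Path i a) (post : Quiver.Path b j)
        (r : Quiver.Path a b →₀ k), r ∈ B.rel a b ∧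
          x = Finsupp.mapDomain
            (fun p => (⟨i, j, (pre.comp p).comp post⟩ : PathsOf V)) r }

/-- `M` is a maximal linearly independent set of maximal bound paths of `B`:
the elements of `M` are maximal bound paths, their images in `kQ/(ρ)` are linearly
independent, and the image of every maximal bound path lies in their span. -/
def IsMaxIndepSetOfMaxPaths {k : Type} [Field k] {V : Type} [Quiver.{0} V]
    (B : BoundQuiver k V) (M : Set (PathsOf V)) : Prop :=
  (∀ p ∈ M, B.MaxBound p.2.2) ∧
  LinearIndependent k
    (fun p : M => Submodule.Quotient.mk (p := B.bigIdl) (Finsupp.single p.1 1)) ∧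
  (∀ q : PathsOf V, B.MaxBound q.2.2 →
    Submodule.Quotient.mk (p := B.bigIdl) (Finsupp.single q 1) ∈
      Submodule.span k (Set.range
        fun p : M => Submodule.Quotient.mk (p := B.bigIdl) (Finsupp.single p.1 1)))

end
/-! ### The quiver of the first ZQ-type construction `ℤ|_{n-1} Q` -/

/-- Vertices of `ℤ|_{n-1} Q`: pairs `(i, t)` with `i` a vertex of `Q` and `t ∈ ℤ`. -/
def ZnVert (V : Type) : Type := V × ℤ

/-- Arrows of `ℤ|_{n-1} Q`: arrows `(α, t) : (i,t) → (j,t)` of type `α` for each arrow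
`α : i → j` of `Q`, and arrows `(β_p, t) : (t(p), t) → (s(p), t+1)` of type `β` for
each `p` in the chosen maximal linearly independent set `M` of maximal bound paths. -/
def ZnHom {V : Type} [Quiver.{0} V] (M : Set (PathsOf V)) :
    ZnVert V → ZnVert V → Type :=
  fun a b =>
    ((a.1 ⟶ b.1) × PLift (b.2 = a.2)) ⊕
      ({ p : PathsOf V // p ∈ M ∧ p.2.1 = a.1 ∧ p.1 = b.1 } × PLift (b.2 = a.2 + 1))

/-- The quiver structure of `ℤ|_{n-1} Q`. -/
def znQuiver {V : Type} [Quiver.{0} V] (M : Set (PathsOf V)) : Quiver.{0} (ZnVert V) :=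
  ⟨ZnHom M⟩

/-!
Send each walk in `ℤ|_{n-1} Q` to a walk in `Q` by keeping the arrows of type `α` and
replacing an arrow `β_p` by the path `p` traversed backwards. Since `p` has length `n`,
each step changes the grade by `-(n + 1)` times the change of the `ℤ`-coordinate. A cyclic
walk does not change that coordinate, so its grade equals the grade of its image, which
is `0` when `Q` is nicely-graded.
-/

namespace QWalk

variable {V : Type} [Quiver.{0} V]

theorem grade_append : ∀ {i j l : V} (w : QWalk V i j) (w' : QWalk V j l),
    (w.append w').grade = w.grade + w'.grade
  | _, _, _, .nil _, _ => by simp [append, grade]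
  | _, _, _, .fwd _ w, w' => by simp only [append, grade, grade_append w w']; ring
  | _, _, _, .bwd _ w, w' => by simp only [append, grade, grade_append w w']; ring

def reverse : ∀ {i j : V}, QWalk V i j → QWalk V j i
  | _, _, .nil i => .nil i
  | _, _, .fwd α w => w.reverse.append (.bwd α (.nil _))
  | _, _, .bwd α w => w.reverse.append (.fwd α (.nil _))

@[simp]
theorem grade_reverse : ∀ {i j : V} (w : QWalk V i j), w.reverse.grade = -w.grade
  | _, _, .nil _ => by simp [reverse, grade]
  | _, _, .fwd _ w => by simp only [reverse, grade_append, grade_reverse w, grade]; ring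
  | _, _, .bwd _ w => by simp only [reverse, grade_append, grade_reverse w, grade]; ring

end QWalk

def Quiver.Path.toQWalk {V : Type} [Quiver.{0} V] :
    ∀ {i j : V}, Quiver.Path i j → QWalk V i j
  | _, _, .nil => .nil _
  | _, _, .cons p e => p.toQWalk.append (.fwd e (.nil _))

@[simp]
theorem Quiver.Path.grade_toQWalk {V : Type} [Quiver.{0} V] :
    ∀ {i j : V} (p : Quiver.Path i j), p.toQWalk.grade = p.length
  | _, _, .nil => by simp [toQWalk, QWalk.grade]
  | _, _, .cons p _ => by
      simp only [toQWalk, QWalk.grade_append, grade_toQWalk p, QWalk.grade, length_cons]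
      push_cast; ring

theorem QWalk.exists_image_grade {V W : Type} [Quiver.{0} V] [Quiver.{0} W]
    (f : W → V) (h : W → ℤ) (c : ℤ)
    (harrow : ∀ {a b : W} (_ : a ⟶ b), ∃ w : QWalk V (f a) (f b),
      w.grade = 1 - c * (h b - h a)) :
    ∀ {a b : W} (w : QWalk W a b), ∃ w' : QWalk V (f a) (f b),
      w'.grade = w.grade - c * (h b - h a)
  | _, _, .nil _ => ⟨.nil _, by simp [grade]⟩
  | _, _, .fwd e w => by
      obtain ⟨u, hu⟩ := harrow e
      obtain ⟨w', hw'⟩ := exists_image_grade f h c harrow w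
      exact ⟨u.append w', by rw [grade_append, hu, hw', grade]; ring⟩
  | _, _, .bwd e w => by
      obtain ⟨u, hu⟩ := harrow e
      obtain ⟨w', hw'⟩ := exists_image_grade f h c harrow w
      exact ⟨u.reverse.append w', by rw [grade_append, grade_reverse, hu, hw', grade]; ring⟩

theorem NicelyGraded.of_exists_walk {V W : Type} [Quiver.{0} V] [Quiver.{0} W]
    (hV : NicelyGraded V) (f : W → V) (h : W → ℤ) (c : ℤ)
    (harrow : ∀ {a b : W} (_ : a ⟶ b), ∃ w : QWalk V (f a) (f b),
      w.grade = 1 - c * (h b - h a)) :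
    NicelyGraded W := by
  intro a w
  obtain ⟨w', hw'⟩ := QWalk.exists_image_grade f h c harrow w
  simpa [hV _ w'] using hw'.symm

theorem ZnHom.exists_walk {V : Type} [Quiver.{0} V] {M : Set (PathsOf V)} {n : ℕ}
    (hlen : ∀ p ∈ M, p.2.2.length = n) :
    ∀ {a b : ZnVert V} (_ : ZnHom M a b), ∃ w : QWalk V a.1 b.1,
      w.grade = 1 - (n + 1) * (b.2 - a.2)
  | _, _, .inl (α, ⟨ht⟩) => ⟨.fwd α (.nil _), by simp [QWalk.grade, ht]⟩
  | (_, _), (_, _), .inr (⟨⟨_, _, p⟩, hpM, rfl, rfl⟩, ⟨ht⟩) => by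
      dsimp only at ht
      exact ⟨p.toQWalk.reverse, by simp [ht, ← hlen _ hpM]⟩

theorem zn_construction_nicelyGraded_general {k : Type} [Field k] {V : Type} [Quiver.{0} V]
    (B : BoundQuiver k V) (n : ℕ) (M : Set (PathsOf V))
    (hpg : B.ProperlyGraded n)
    (hM : IsMaxIndepSetOfMaxPaths B M)
    (hnice : NicelyGraded V) :
    @NicelyGraded (ZnVert V) (znQuiver M) :=
  letI := znQuiver M
  hnice.of_exists_walk Prod.fst Prod.snd (n + 1)
    (ZnHom.exists_walk (M := M) fun p hp => hpg _ (hM.1 p hp))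

/-- Theorem `cychome`.
Let `Q` be an acyclic `n`-properly-graded quiver.  If `Q` is nicely-graded, then the
first `ℤQ`-type construction `ℤ|_{n-1} Q` is also nicely-graded. -/
theorem zn_construction_nicelyGraded {k : Type} [Field k] {V : Type} [Quiver.{0} V]
    (B : BoundQuiver k V) (n : ℕ) (M : Set (PathsOf V))
    (hpg : B.ProperlyGraded n) (hacyc : QuiverAcyclic V)
    (hM : IsMaxIndepSetOfMaxPaths B M)
    (hnice : NicelyGraded V) :
    @NicelyGraded (ZnVert V) (znQuiver M) :=
  zn_construction_nicelyGraded_general B n M hpg hM hnice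
end

section
/- Let Q be a finite n-nicely-graded quiver, t̃Q its returning arrow quiver, and t̃t̃Q the returning arrow quiver of t̃Q (obtained from t̃Q by adding a loop γ_i at each vertex), which is a stable (n+1)-translation quiver. Then the multi-layer quiver ĥQ, identified with the full bound subquiver of Z_v t̃t̃Q on the vertex set {(i,t,s) : (i,t) ∈ Q_0, 0 ≤ t ≤ n, t ≤ s ≤ t+n+1}, is a complete τ_v-slice of Z_v t̃t̃Q, where τ_v is the (n+1)-translation of Z_v t̃t̃Q and satisfies τ_v^{−1}(i,t,s) = (i, t+n+1, s+n+2). -/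
/-! ### Stable n-translation quivers, complete τ-slices and τ-mutations -/

noncomputable section

/-- `B` is a *stable `n`-translation quiver* with `n`-translation `τ`: the bound quiver
of a graded self-injective algebra of Loewy length `n+2`.  Every maximal bound path
has length `n+1` and runs from `τ i` to `i`, and (self-injectivity) every bound path
can be completed on either side to a maximal bound path. -/
structure IsStableTranslationQuiver {k : Type} [Field k] {V : Type} [Quiver.{0} V]
    (B : BoundQuiver k V) (n : ℕ) (τ : V ≃ V) : Prop where
  max_len : ∀ {i j : V} (p : Quiver.Path i j), B.MaxBound p → p.length = n + 1
  max_src : ∀ {i j : V} (p : Quiver.Path i j), B.MaxBound p → i = τ j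
  extend_left : ∀ {i j : V} (p : Quiver.Path i j), B.Bound p →
    ∃ q : Quiver.Path (τ j) i, B.MaxBound (q.comp p)
  extend_right : ∀ {i j : V} (p : Quiver.Path i j), B.Bound p →
    ∃ q : Quiver.Path j (τ.symm i), B.MaxBound (p.comp q)

/-- `τ` has finitely many orbits on the vertices. -/
def FinitelyManyOrbits {V : Type} (τ : V ≃ V) : Prop :=
  ∃ F : Finset V, ∀ v : V, ∃ m : ℤ, (τ ^ m) v ∈ F

/-- `S` is a *complete `τ`-slice*: a full convex subquiver whose vertex set meets each
`τ`-orbit exactly once. -/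
structure IsCompleteTauSlice {V : Type} [Quiver.{0} V] (τ : V ≃ V) (S : Set V) : Prop where
  orbit_unique : ∀ v : V, ∃! m : ℤ, (τ ^ m) v ∈ S
  convex : ∀ {i j : V} (p : Quiver.Path i j), i ∈ S → j ∈ S → ∀ v : V, p.MemV v → v ∈ S

/-- `i` is a source of the full subquiver on `S`. -/
def IsSliceSource {V : Type} [Quiver.{0} V] (S : Set V) (i : V) : Prop :=
  i ∈ S ∧ ∀ j ∈ S, IsEmpty (j ⟶ i)

/-- `i` is a sink of the full subquiver on `S`. -/
def IsSliceSink {V : Type} [Quiver.{0} V] (S : Set V) (i : V) : Prop :=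
  i ∈ S ∧ ∀ j ∈ S, IsEmpty (i ⟶ j)

/-- The τ-mutation `s_i^+ S` of a complete τ-slice `S` at a source `i`:
remove `i` and add `τ⁻¹ i`. -/
def mutPlus {V : Type} (τ : V ≃ V) (S : Set V) (i : V) : Set V :=
  insert (τ.symm i) (S \ {i})

/-- The τ-mutation `s_j^- S` of a complete τ-slice `S` at a sink `j`:
remove `j` and add `τ j`. -/
def mutMinus {V : Type} (τ : V ≃ V) (S : Set V) (j : V) : Set V :=
  insert (τ j) (S \ {j})

/-- Iterated source mutations `s^+_{i_r} ⋯ s^+_{i_1} S` along a list `[i_1, …, i_r]`. -/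
def mutPlusList {V : Type} (τ : V ≃ V) : Set V → List V → Set V
  | S, [] => S
  | S, i :: l => mutPlusList τ (mutPlus τ S i) l

/-- Iterated sink mutations `s^-_{i_r} ⋯ s^-_{i_1} S`. -/
def mutMinusList {V : Type} (τ : V ≃ V) : Set V → List V → Set V
  | S, [] => S
  | S, i :: l => mutMinusList τ (mutMinus τ S i) l

/-- `[i_1, …, i_r]` is an *admissible source sequence* for `S`. -/
def AdmissibleSourceSeq {V : Type} [Quiver.{0} V] (τ : V ≃ V) : Set V → List V → Prop
  | _, [] => True
  | S, i :: l => IsSliceSource S i ∧ AdmissibleSourceSeq τ (mutPlus τ S i) l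

/-- `[i_1, …, i_r]` is an *admissible sink sequence* for `S`. -/
def AdmissibleSinkSeq {V : Type} [Quiver.{0} V] (τ : V ≃ V) : Set V → List V → Prop
  | _, [] => True
  | S, i :: l => IsSliceSink S i ∧ AdmissibleSinkSeq τ (mutMinus τ S i) l

/-- One mixed mutation step: `(true, i)` is `s_i^+`, `(false, i)` is `s_i^-`. -/
def mutStep {V : Type} (τ : V ≃ V) (S : Set V) : Bool × V → Set V
  | (true, i) => mutPlus τ S i
  | (false, i) => mutMinus τ S i

/-- Iterated mixed mutations. -/
def mutMixedList {V : Type} (τ : V ≃ V) : Set V → List (Bool × V) → Set V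
  | S, [] => S
  | S, s :: l => mutMixedList τ (mutStep τ S s) l

/-- Admissibility of a mixed sequence of mutations: each `s_i^+` is taken at a source
and each `s_i^-` at a sink of the current slice. -/
def AdmissibleMixedSeq {V : Type} [Quiver.{0} V] (τ : V ≃ V) : Set V → List (Bool × V) → Prop
  | _, [] => True
  | S, (true, i) :: l => IsSliceSource S i ∧ AdmissibleMixedSeq τ (mutPlus τ S i) l
  | S, (false, i) :: l => IsSliceSink S i ∧ AdmissibleMixedSeq τ (mutMinus τ S i) l

end
/-! ### The returning arrow quiver `Q̃` of an n-properly-graded quiver -/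

noncomputable section

/-- Vertices of the returning arrow quiver `Q̃` (the same as those of `Q`; the set `M`
of maximal bound paths is a phantom parameter fixing the quiver structure). -/
def RVert (V : Type) [Quiver.{0} V] (M : Set (PathsOf V)) : Type := V

/-- The underlying vertex of `Q`. -/
def RVert.un {V : Type} [Quiver.{0} V] {M : Set (PathsOf V)} (x : RVert V M) : V := x

/-- A vertex of `Q` seen as a vertex of `Q̃`. -/
def toRVert {V : Type} [Quiver.{0} V] (M : Set (PathsOf V)) (x : V) : RVert V M := x

/-- Arrows of `Q̃`: the arrows of `Q` together with a returning arrow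
`β_p : t(p) → s(p)` for each `p ∈ M`. -/
instance rQuiver {V : Type} [Quiver.{0} V] (M : Set (PathsOf V)) :
    Quiver.{0} (RVert V M) :=
  ⟨fun i j => (i.un ⟶ j.un) ⊕
    { p : PathsOf V // p ∈ M ∧ p.2.1 = i.un ∧ p.1 = j.un }⟩

/-- The inclusion of `Q` into its returning arrow quiver. -/
def rIncl {V : Type} [Quiver.{0} V] (M : Set (PathsOf V)) : V ⥤q RVert V M where
  obj i := i
  map α := Sum.inl α

/-- The number of returning arrows occurring in a path of `Q̃`. -/
def betaCount {V : Type} [Quiver.{0} V] {M : Set (PathsOf V)} :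
    ∀ {i j : RVert V M}, Quiver.Path i j → ℕ
  | _, _, .nil => 0
  | _, _, .cons p α => betaCount p + (Sum.elim (fun _ => 0) (fun _ => 1) α)

/-- Data of a dual basis `M^*` for the maximal linearly independent set `M` of maximal
bound paths of an `n`-properly-graded quiver: for each `f ∈ M` a linear functional
`f^*` on the path space which kills the ideal of relations, kills the classes of paths
of length `≠ n`, and is dual to the basis `M` of the degree-`n` part of `kQ/(ρ)`. -/
structure DualBasisData {k V : Type} [Field k] [Quiver.{0} V] (B : BoundQuiver k V)
    (M : Set (PathsOf V)) (n : ℕ) where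
  fstar : M → ((PathsOf V →₀ k) →ₗ[k] k)
  vanish_idl : ∀ (f : M) (x : PathsOf V →₀ k), x ∈ B.bigIdl → fstar f x = 0
  dual_self : ∀ f : M, fstar f (Finsupp.single f.1 1) = 1
  dual_ne : ∀ f g : M, f ≠ g → fstar f (Finsupp.single g.1 1) = 0
  vanish_len : ∀ (f : M) (q : PathsOf V), q.2.2.length ≠ n →
    fstar f (Finsupp.single q 1) = 0

/-- The path `x β_f y` of `Q̃` through the returning arrow `β_f`. -/
def mkBetaPath {V : Type} [Quiver.{0} V] (M : Set (PathsOf V)) (f : M)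
    {v v' : V} (x : Quiver.Path f.1.1 v') (y : Quiver.Path v f.1.2.1) :
    Quiver.Path (toRVert M v) (toRVert M v') :=
  (((rIncl M).mapPath y).cons
      (show (rIncl M).obj f.1.2.1 ⟶ (toRVert M f.1.1) from Sum.inr ⟨f.1, f.2, rfl, rfl⟩)).comp
    ((rIncl M).mapPath x)

/-- The relations `ρ_M` of `Q̃` defining the dual bimodule `DΛ`: linear combinations
`Σ_f c_f x_f β_f y_f` such that `Σ_f c_f f^* (y_f p x_f) = 0` for all paths `p`
from `t(x_f)` to `s(y_f)`. -/
def rhoM {k V : Type} [Field k] [Quiver.{0} V] {B : BoundQuiver k V}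
    {M : Set (PathsOf V)} {n : ℕ} (D : DualBasisData B M n)
    (v v' : RVert V M) : Set (Quiver.Path v v' →₀ k) :=
  { z | ∃ (s : Finset (Σ f : M, Quiver.Path f.1.1 v'.un × Quiver.Path v.un f.1.2.1))
        (c : (Σ f : M, Quiver.Path f.1.1 v'.un × Quiver.Path v.un f.1.2.1) → k),
      z = ∑ t ∈ s, Finsupp.single (mkBetaPath M t.1 t.2.1 t.2.2) (c t) ∧
      ∀ p : Quiver.Path v'.un v.un,
        (∑ t ∈ s, c t * D.fstar t.1
          (Finsupp.single ⟨t.1.1.1, t.1.1.2.1, (t.2.1.comp p).comp t.2.2⟩ 1)) = 0 }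

/-- The composite of two returning arrows `β_f β_g`. -/
def bbPath {V : Type} [Quiver.{0} V] (M : Set (PathsOf V)) (f g : M)
    (h : f.1.2.1 = g.1.1) :
    Quiver.Path (toRVert M g.1.2.1) (toRVert M f.1.1) :=
  ((Quiver.Path.nil : Quiver.Path (toRVert M g.1.2.1) (toRVert M g.1.2.1)).cons
      (show toRVert M g.1.2.1 ⟶ toRVert M g.1.1 from Sum.inr ⟨g.1, g.2, rfl, rfl⟩)).cons
    (show toRVert M g.1.1 ⟶ toRVert M f.1.1 from Sum.inr ⟨f.1, f.2, h, rfl⟩)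

/-- The relations `β_p β_{p'}` of `Q̃`. -/
def rhoBB {k : Type} [Field k] {V : Type} [Quiver.{0} V] (M : Set (PathsOf V))
    (v v' : RVert V M) : Set (Quiver.Path v v' →₀ k) :=
  { z | ∃ (f g : M) (h : f.1.2.1 = g.1.1) (h1 : toRVert M g.1.2.1 = v)
      (h2 : toRVert M f.1.1 = v'),
      z = cast (by subst h1; subst h2; rfl)
        (Finsupp.single (bbPath M f g h) (1 : k)) }

/-- The relations of `Q` viewed as relations of `Q̃`. -/
def rhoOrig {k V : Type} [Field k] [Quiver.{0} V] (B : BoundQuiver k V)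
    (M : Set (PathsOf V)) (v v' : RVert V M) : Set (Quiver.Path v v' →₀ k) :=
  { z | ∃ r ∈ B.rel v.un v'.un,
      z = Finsupp.mapDomain (fun p => (rIncl M).mapPath p) r }

/-- The returning arrow quiver `Q̃ = (Q₀, Q₁ ∪ Q_{1,M}, ρ ∪ ρ_M ∪ {β_p β_{p'}})`
as a bound quiver. -/
def rBound {k V : Type} [Field k] [Quiver.{0} V] (B : BoundQuiver k V)
    {M : Set (PathsOf V)} {n : ℕ} (D : DualBasisData B M n) :
    BoundQuiver k (RVert V M) :=
  ⟨fun v v' => rhoOrig B M v v' ∪ rhoM D v v' ∪ rhoBB M v v'⟩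

end
/-! ### The second ZQ-type construction: the separated directed quiver `ℤ_v Q̃` -/

noncomputable section

/-- Vertices of the separated directed quiver: pairs `(i, m)`, `m ∈ ℤ`. -/
def ZvVert (W : Type) : Type := W × ℤ

/-- Arrows of the separated directed quiver: an arrow `(α, m) : (i,m) → (j,m+1)`
for each arrow `α : i → j`. -/
def ZvHom {W : Type} [Quiver.{0} W] : ZvVert W → ZvVert W → Type :=
  fun a b => (a.1 ⟶ b.1) × PLift (b.2 = a.2 + 1)

/-- The quiver structure of the separated directed quiver. -/
instance zvQuiver (W : Type) [Quiver.{0} W] : Quiver.{0} (ZvVert W) := ⟨ZvHom⟩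

/-- The lift `(p, m)` of a path `p` of `Q̃` to a path of `ℤ_v Q̃` starting at level `m`
(and hence ending at level `m + l(p)`). -/
def zvLiftPath {W : Type} [Quiver.{0} W] {a : W} (m : ℤ) :
    ∀ {b : W} (p : Quiver.Path a b) (m' : ℤ), m' = m + p.length →
      Quiver.Path (V := ZvVert W) (a, m) (b, m')
  | _, .nil, m', h => by
      have hm : m' = m := by simpa using h
      subst hm; exact Quiver.Path.nil
  | b, .cons (b := c) p α, m', h => by
      have hlen : m' - 1 = m + p.length := by
        simp only [Quiver.Path.length_cons] at h
        push_cast at h ⊢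
        omega
      exact (zvLiftPath m p (m' - 1) hlen).cons
        (show ZvHom (c, m' - 1) (b, m') from ⟨α, PLift.up (by omega)⟩)

/-- The relations of the separated directed quiver: the lifts `(ζ, m)` of the
relations `ζ` of `Q̃` to each level `m`. -/
def zvRel {k W : Type} [Field k] [Quiver.{0} W] (B : BoundQuiver k W) :
    ∀ a b : ZvVert W, Set (Quiver.Path a b →₀ k) :=
  fun a b =>
    { z | ∃ r ∈ B.rel a.1 b.1, (∀ p ∈ r.support, b.2 = a.2 + p.length) ∧
        z = r.sum fun p c =>
          if h : b.2 = a.2 + p.length then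
            Finsupp.single (zvLiftPath a.2 p b.2 h) c
          else 0 }

/-- The separated directed quiver `ℤ_v Q̃` as a bound quiver. -/
def zvBound {k W : Type} [Field k] [Quiver.{0} W] (B : BoundQuiver k W) :
    BoundQuiver k (ZvVert W) :=
  ⟨zvRel B⟩

end

noncomputable section

/-- Vertices of `t̃t̃Q`, the returning arrow quiver of `Q̃` (obtained from `Q̃` by
adding a loop at each vertex). -/
def LVert (V : Type) [Quiver.{0} V] (M : Set (PathsOf V)) : Type := RVert V M

/-- The underlying vertex of `Q̃`. -/
def LVert.un {V : Type} [Quiver.{0} V] {M : Set (PathsOf V)} (x : LVert V M) :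
    RVert V M := x

/-- Arrows of `t̃t̃Q`: the arrows of `Q̃` together with a loop `γ_i` at each vertex. -/
instance lQuiver {V : Type} [Quiver.{0} V] (M : Set (PathsOf V)) :
    Quiver.{0} (LVert V M) :=
  ⟨fun i j => (i.un ⟶ j.un) ⊕ PLift (i = j)⟩

/-! On the vertices `(i, s)` of `ℤ_v t̃t̃Q` put `d (i, s) = s - u i`. An arrow raises `s` by one
while `u` changes by `+1` (arrow of `Q`), by `-n` (returning arrow `β_p`, as `p` has length `n`)
or by `0` (loop `γ_i`), so `d` never decreases along a path and the window `0 ≤ d ≤ n + 1` is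
convex. Since `τ_v` lowers `d` by `n + 2`, every `τ_v`-orbit meets this window exactly once. -/

namespace Quiver.Path

variable {V : Type} [Quiver.{0} V]

lemma memV_target {i j : V} (p : Path i j) : p.MemV j := by
  cases p
  · rfl
  · exact Or.inl rfl

lemma grading_eq_add_length (u : V → ℤ) (hu : ∀ i j : V, (i ⟶ j) → u j = u i + 1) :
    ∀ {a b : V} (p : Path a b), u b = u a + p.length
  | _, _, .nil => by simp
  | _, _, .cons p α => by
      rw [hu _ _ α, grading_eq_add_length u hu p, length_cons]
      push_cast
      ring

lemma le_and_le_of_memV {α : Type*} [Preorder α] (φ : V → α)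
    (hφ : ∀ a b : V, (a ⟶ b) → φ a ≤ φ b) {i : V} :
    ∀ {j : V} (p : Path i j) {x : V}, p.MemV x → φ i ≤ φ x ∧ φ x ≤ φ j
  | _, .nil, _, rfl => ⟨le_rfl, le_rfl⟩
  | _, .cons p e, x, hx => by
      have hlast := hφ _ _ e
      rcases hx with rfl | hx
      · have := le_and_le_of_memV φ hφ p (memV_target p)
        exact ⟨(this.1.trans this.2).trans hlast, le_rfl⟩
      · obtain ⟨h₁, h₂⟩ := le_and_le_of_memV φ hφ p hx
        exact ⟨h₁, h₂.trans hlast⟩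

end Quiver.Path

section SeparatedDirectedQuiver

variable {W : Type} [Quiver.{0} W]

lemma zv_sub_grading_le_of_arrow (φ : W → ℤ) (hφ : ∀ a b : W, (a ⟶ b) → φ b ≤ φ a + 1)
    {x y : ZvVert W} (e : x ⟶ y) : x.2 - φ x.1 ≤ y.2 - φ y.1 := by
  obtain ⟨α, ⟨hy⟩⟩ := e
  have := hφ _ _ α
  omega

lemma prodCongr_refl_subRight_zpow_apply {α : Type*} (c m : ℤ) (x : α × ℤ) :
    ((Equiv.prodCongr (Equiv.refl α) (Equiv.subRight c)) ^ m) x = (x.1, x.2 - m * c) := by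
  induction m using Int.induction_on generalizing x with
  | zero => simp
  | succ m ih =>
      rw [zpow_add_one, Equiv.Perm.mul_apply, ih]
      exact Prod.ext rfl (show x.2 - c - m * c = x.2 - ((m : ℤ) + 1) * c by ring)
  | pred m ih =>
      rw [zpow_sub_one, Equiv.Perm.mul_apply, ih]
      exact Prod.ext rfl (show x.2 + c - -(m : ℤ) * c = x.2 - (-(m : ℤ) - 1) * c by ring)

theorem isCompleteTauSlice_zv (φ : W → ℤ) (hφ : ∀ a b : W, (a ⟶ b) → φ b ≤ φ a + 1)
    (n : ℕ) :
    IsCompleteTauSlice (V := ZvVert W)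
      (Equiv.prodCongr (Equiv.refl W) (Equiv.subRight ((n : ℤ) + 2)))
      {x : ZvVert W | φ x.1 ≤ x.2 ∧ x.2 ≤ φ x.1 + n + 1} where
  orbit_unique v := by
    refine (existsUnique_congr fun m => ?_).1
      (existsUnique_sub_zsmul_mem_Ico (by positivity : (0 : ℤ) < n + 2) (v.2 - φ v.1) 0)
    -- `erw`: the permutation acts on `ZvVert W`, which is `W × ℤ` only after unfolding
    erw [prodCongr_refl_subRight_zpow_apply]
    simp only [Set.mem_Ico, smul_eq_mul]
    constructor <;> rintro ⟨h₁, h₂⟩ <;> constructor <;> linarith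
  convex p hi hj x hx := by
    obtain ⟨h₁, h₂⟩ := Quiver.Path.le_and_le_of_memV _
      (fun _ _ e => zv_sub_grading_le_of_arrow φ hφ e) p hx
    exact ⟨by linarith [hi.1], by linarith [hj.2]⟩

end SeparatedDirectedQuiver

section ReturningArrows

variable {k V : Type} [Field k] [Quiver.{0} V] {B : BoundQuiver k V} {n : ℕ}
  {M : Set (PathsOf V)} (u : V → ℤ) (hu : ∀ i j : V, (i ⟶ j) → u j = u i + 1)
  (hpg : B.ProperlyGraded n) (hM : ∀ p ∈ M, B.MaxBound p.2.2)
include hu hpg hM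

lemma grading_source_eq_add_of_returningArrow {i j : RVert V M}
    (β : { p : PathsOf V // p ∈ M ∧ p.2.1 = i.un ∧ p.1 = j.un }) : u i.un = u j.un + n := by
  obtain ⟨p, hp, hi, hj⟩ := β
  rw [← hi, ← hj, Quiver.Path.grading_eq_add_length u hu p.2.2, hpg _ (hM p hp)]

lemma grading_le_succ_of_rArrow {i j : RVert V M} (e : i ⟶ j) : u j.un ≤ u i.un + 1 := by
  rcases e with α | β
  · exact (hu _ _ α).le
  · have := grading_source_eq_add_of_returningArrow u hu hpg hM β
    omega

lemma grading_le_succ_of_lArrow {i j : LVert V M} (e : i ⟶ j) :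
    u j.un.un ≤ u i.un.un + 1 := by
  rcases e with e | loop
  · exact grading_le_succ_of_rArrow u hu hpg hM e
  · rw [loop.down]
    omega

end ReturningArrows

theorem multilayer_is_complete_slice_of_zv_general {k V : Type} [Field k] [Quiver.{0} V]
    (B : BoundQuiver k V) (n : ℕ) (M : Set (PathsOf V))
    (hpg : B.ProperlyGraded n) (hM : IsMaxIndepSetOfMaxPaths B M)
    (u : V → ℤ) (hu : ∀ (i j : V), (i ⟶ j) → u j = u i + 1) :
    IsCompleteTauSlice
        (show ZvVert (LVert V M) ≃ ZvVert (LVert V M) from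
          Equiv.prodCongr (Equiv.refl (LVert V M)) (Equiv.subRight ((n : ℤ) + 2)))
        { x : ZvVert (LVert V M) |
          u x.1.un.un ≤ x.2 ∧ x.2 ≤ u x.1.un.un + n + 1 } ∧
      ∀ x : ZvVert (LVert V M),
        (show ZvVert (LVert V M) ≃ ZvVert (LVert V M) from
          Equiv.prodCongr (Equiv.refl (LVert V M))
            (Equiv.subRight ((n : ℤ) + 2))).symm x = (x.1, x.2 + (n + 2)) :=
  ⟨isCompleteTauSlice_zv (fun i => u i.un.un)
    (fun _ _ e => grading_le_succ_of_lArrow u hu hpg hM.1 e) n, fun _ => rfl⟩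

/-- Theorem `tower:slicevv` together with Lemma `tower:tauvv`.
Let `Q` be a finite `n`-nicely-graded quiver (with grading function `u` taking values
in `[0, n]`), `Q̃` its returning arrow quiver and `t̃t̃Q` the returning arrow quiver of
`Q̃` (adding a loop at each vertex), a stable `(n+1)`-translation quiver.  Then the
multi-layer quiver `ĥQ`, identified with the full bound subquiver of `ℤ_v t̃t̃Q` on
the vertex set `{(i, t, s) : 0 ≤ t ≤ n, t ≤ s ≤ t + n + 1}` (with `t = u i`), is a
complete `τ_v`-slice of `ℤ_v t̃t̃Q`, where the `(n+1)`-translation `τ_v` satisfies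
`τ_v⁻¹ (i, t, s) = (i, t + n + 1, s + n + 2)`. -/
theorem multilayer_is_complete_slice_of_zv {k V : Type} [Field k] [Quiver.{0} V]
    [Fintype V] (B : BoundQuiver k V) (n : ℕ) (M : Set (PathsOf V))
    (hpg : B.ProperlyGraded n) (hM : IsMaxIndepSetOfMaxPaths B M)
    (D : DualBasisData B M n)
    (u : V → ℤ) (hu : ∀ (i j : V), (i ⟶ j) → u j = u i + 1)
    (hu0 : ∀ i : V, 0 ≤ u i ∧ u i ≤ n)
    (B2 : BoundQuiver k (LVert V M))
    (hB2 : IsStableTranslationQuiver B2 (n + 1) (Equiv.refl (LVert V M))) :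
    IsCompleteTauSlice
        (show ZvVert (LVert V M) ≃ ZvVert (LVert V M) from
          Equiv.prodCongr (Equiv.refl (LVert V M)) (Equiv.subRight ((n : ℤ) + 2)))
        { x : ZvVert (LVert V M) |
          u x.1.un.un ≤ x.2 ∧ x.2 ≤ u x.1.un.un + n + 1 } ∧
      ∀ x : ZvVert (LVert V M),
        (show ZvVert (LVert V M) ≃ ZvVert (LVert V M) from
          Equiv.prodCongr (Equiv.refl (LVert V M))
            (Equiv.subRight ((n : ℤ) + 2))).symm x = (x.1, x.2 + (n + 2)) :=
  multilayer_is_complete_slice_of_zv_general B n M hpg hM u hu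

end
end
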